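/- Let E be a finite set, let Z ⊆ 2^E be a nonempty collection of subsets of E, and let ρ : Z → ℤ. There exists a matroid M on E whose collection of cyclic flats is exactly Z and whose rank function restricted to Z equals ρ, if and only if the following four axioms hold: (Z0) (Z, ⊆) is a lattice, i.e., every pair of members of Z has a least upper bound and a greatest lower bound within Z under inclusion (whose minimum element is denoted 0_Z and whose join and meet are denoted ∨ and ∧); (Z1) ρ(0_Z) = 0; (Z2) for all X, Y ∈ Z with X ⊊ Y, 0 < ρ(Y) − ρ(X) < |Y| − |X|; (Z3) for all X, Y ∈ Z, ρ(X) + ρ(Y) ≥ ρ(X ∨ Y) + ρ(X ∧ Y) + |(X ∩ Y) \ (X ∧ Y)|. -/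
import Mathlib


/-- A matroid given by an integer-valued rank function on subsets of a finite ground set. -/
structure RankMatroid (α : Type) [DecidableEq α] where
  E : Finset α
  rk : Finset α → ℤ
  rk_nonneg : ∀ X : Finset α, X ⊆ E → 0 ≤ rk X
  rk_le_card : ∀ X : Finset α, X ⊆ E → rk X ≤ X.card
  rk_mono : ∀ X Y : Finset α, X ⊆ Y → Y ⊆ E → rk X ≤ rk Y
  rk_submod : ∀ X Y : Finset α, X ⊆ E → Y ⊆ E → rk (X ∪ Y) + rk (X ∩ Y) ≤ rk X + rk Y

namespace RankMatroid

variable {α : Type} [DecidableEq α]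

/-- The minimum distance `d_X` of the restriction to `X`:
`d_X = min {|Y| : Y ⊆ X, ρ(X \ Y) < ρ(X)}`. -/
noncomputable def dist (M : RankMatroid α) (X : Finset α) : ℕ :=
  sInf {m : ℕ | ∃ Y : Finset α, Y ⊆ X ∧ Y.card = m ∧ M.rk (X \ Y) < M.rk X}

/-- Closure: `cl(X) = {y ∈ E : ρ(X ∪ {y}) = ρ(X)}`. -/
def cl (M : RankMatroid α) (X : Finset α) : Finset α :=
  M.E.filter fun y => M.rk (insert y X) = M.rk X

/-- `X` is cyclic if `ρ(X \ {x}) = ρ(X)` for every `x ∈ X`. -/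
def Cyclic (M : RankMatroid α) (X : Finset α) : Prop :=
  ∀ x ∈ X, M.rk (X.erase x) = M.rk X

/-- Cyclic core: `cyc(X) = {x ∈ X : ρ(X \ {x}) = ρ(X)}`. -/
def cyc (M : RankMatroid α) (X : Finset α) : Finset α :=
  X.filter fun x => M.rk (X.erase x) = M.rk X

/-- A cyclic flat is a set which is both cyclic and a flat. -/
def IsCyclicFlat (M : RankMatroid α) (X : Finset α) : Prop :=
  X ⊆ M.E ∧ M.Cyclic X ∧ M.cl X = X

/-- `Z(M)`: the collection of cyclic flats of `M`. -/
def Z (M : RankMatroid α) : Set (Finset α) := {X | M.IsCyclicFlat X}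

/-- `M` is non-degenerate: every singleton has rank at least one and `d ≥ 2`. -/
def NonDegenerate (M : RankMatroid α) : Prop :=
  (∀ x ∈ M.E, 1 ≤ M.rk {x}) ∧ 2 ≤ M.dist M.E

/-- `R` is a repair set for `x` with parameters `(r, δ)`. -/
def IsRepairSet (M : RankMatroid α) (r δ : ℤ) (x : α) (R : Finset α) : Prop :=
  R ⊆ M.E ∧ x ∈ R ∧ (R.card : ℤ) ≤ r + δ - 1 ∧ δ ≤ (M.dist R : ℤ)

/-- The collection of cyclic flats of the restriction `M|X`. -/
def ZIn (M : RankMatroid α) (X : Finset α) : Set (Finset α) :=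
  {Y | Y ⊆ X ∧ M.Cyclic Y ∧ X.filter (fun z => M.rk (insert z Y) = M.rk Y) = Y}

/-- `FX` is the meet, in the lattice `(Z(M), ⊆)`, of all cyclic flats containing `X`. -/
def IsMeetOfFlatsContaining (M : RankMatroid α) (X FX : Finset α) : Prop :=
  FX ∈ M.Z ∧ (∀ F ∈ M.Z, X ⊆ F → FX ⊆ F) ∧
    ∀ W ∈ M.Z, (∀ F ∈ M.Z, X ⊆ F → W ⊆ F) → W ⊆ FX

end RankMatroid

namespace RankMatroid

variable {α : Type} [DecidableEq α] (M : RankMatroid α)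

lemma rk_empty' : M.rk ∅ = 0 :=
  le_antisymm (by simpa using M.rk_le_card ∅ (by simp)) (M.rk_nonneg ∅ (by simp))

lemma rk_insert_le {X : Finset α} (hX : X ⊆ M.E) {y : α} (hy : y ∈ M.E) :
    M.rk (insert y X) ≤ M.rk X + 1 := by
  have h := M.rk_submod X {y} hX (by simpa using hy)
  have h1 : M.rk {y} ≤ 1 := by simpa using M.rk_le_card {y} (by simpa using hy)
  have h2 : 0 ≤ M.rk (X ∩ {y}) :=
    M.rk_nonneg _ (subset_trans (Finset.inter_subset_left) hX)
  have : insert y X = X ∪ {y} := by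
    rw [Finset.insert_eq, Finset.union_comm]
  rw [this]; linarith

lemma rk_le_insert {X : Finset α} (hX : X ⊆ M.E) {y : α} (hy : y ∈ M.E) :
    M.rk X ≤ M.rk (insert y X) :=
  M.rk_mono _ _ (Finset.subset_insert _ _) (Finset.insert_subset hy hX)

lemma rk_union_le_add_card {X A : Finset α} (hX : X ⊆ M.E) (hA : A ⊆ M.E) :
    M.rk (X ∪ A) ≤ M.rk X + A.card := by
  classical
  induction A using Finset.induction_on with
  | empty => simp
  | @insert a s ha ih =>
    have hs : s ⊆ M.E := (Finset.subset_insert a s).trans hA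
    have haE : a ∈ M.E := hA (Finset.mem_insert_self a s)
    have h1 : X ∪ insert a s = insert a (X ∪ s) := Finset.union_insert _ _ _
    have h2 := M.rk_insert_le (X := X ∪ s) (Finset.union_subset hX hs) haE
    have h3 := ih hs
    rw [h1, Finset.card_insert_of_notMem ha]
    push_cast
    linarith

lemma subset_cl {X : Finset α} (hX : X ⊆ M.E) : X ⊆ M.cl X := by
  intro y hy
  simp only [cl, Finset.mem_filter]
  exact ⟨hX hy, by rw [Finset.insert_eq_self.mpr hy]⟩

lemma cl_subset_ground (X : Finset α) : M.cl X ⊆ M.E := Finset.filter_subset _ _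

lemma rk_union_eq_of_forall {X A : Finset α} (hX : X ⊆ M.E) (hA : A ⊆ M.E)
    (h : ∀ a ∈ A, M.rk (insert a X) = M.rk X) : M.rk (X ∪ A) = M.rk X := by
  classical
  induction A using Finset.induction_on with
  | empty => simp
  | @insert a s ha ih =>
    have hs : s ⊆ M.E := (Finset.subset_insert a s).trans hA
    have haE : a ∈ M.E := hA (Finset.mem_insert_self a s)
    have ih' : M.rk (X ∪ s) = M.rk X := ih hs (fun b hb => h b (Finset.mem_insert_of_mem hb))
    have hsub := M.rk_submod (X ∪ s) (insert a X)
      (Finset.union_subset hX hs) (Finset.insert_subset haE hX)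
    have hU : (X ∪ s) ∪ insert a X = X ∪ insert a s := by
      ext x
      simp only [Finset.mem_insert, Finset.mem_union]
      tauto
    have hIsub : X ⊆ (X ∪ s) ∩ insert a X :=
      Finset.subset_inter (Finset.subset_union_left) (Finset.subset_insert a X)
    have hI : M.rk X ≤ M.rk ((X ∪ s) ∩ insert a X) :=
      M.rk_mono _ _ hIsub (Finset.inter_subset_right.trans (Finset.insert_subset haE hX))
    have ha' : M.rk (insert a X) = M.rk X := h a (Finset.mem_insert_self a s)
    have hge : M.rk X ≤ M.rk (X ∪ insert a s) :=
      M.rk_mono _ _ (Finset.subset_union_left)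
        (Finset.union_subset hX (Finset.insert_subset haE hs))
    rw [hU] at hsub
    linarith

lemma rk_cl {X : Finset α} (hX : X ⊆ M.E) : M.rk (M.cl X) = M.rk X := by
  have h1 : X ∪ (M.cl X \ X) = M.cl X := Finset.union_sdiff_of_subset (M.subset_cl hX)
  rw [← h1]
  apply M.rk_union_eq_of_forall hX ((Finset.sdiff_subset).trans (M.cl_subset_ground X))
  intro a ha
  have := Finset.mem_sdiff.mp ha
  exact (Finset.mem_filter.mp this.1).2

lemma cl_mono {X Y : Finset α} (hXY : X ⊆ Y) (hY : Y ⊆ M.E) : M.cl X ⊆ M.cl Y := by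
  intro y hy
  obtain ⟨hyE, hyr⟩ := Finset.mem_filter.mp hy
  have hX : X ⊆ M.E := hXY.trans hY
  simp only [cl, Finset.mem_filter]
  refine ⟨hyE, le_antisymm ?_ (M.rk_le_insert hY hyE)⟩
  have hsub := M.rk_submod (insert y X) Y (Finset.insert_subset hyE hX) hY
  have hU : insert y X ∪ Y = insert y Y := by
    rw [Finset.insert_union, Finset.union_eq_right.mpr hXY]
  have hI : M.rk X ≤ M.rk (insert y X ∩ Y) :=
    M.rk_mono _ _ (Finset.subset_inter (Finset.subset_insert _ _) hXY)
      (Finset.inter_subset_right.trans hY)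
  rw [hU] at hsub
  linarith

lemma cl_flat {X : Finset α} (hX : X ⊆ M.E) : M.cl (M.cl X) = M.cl X := by
  apply le_antisymm
  · intro y hy
    obtain ⟨hyE, hyr⟩ := Finset.mem_filter.mp hy
    rw [M.rk_cl hX] at hyr
    simp only [cl, Finset.mem_filter]
    refine ⟨hyE, le_antisymm ?_ (M.rk_le_insert hX hyE)⟩
    calc M.rk (insert y X) ≤ M.rk (insert y (M.cl X)) :=
          M.rk_mono _ _ (Finset.insert_subset_insert _ (M.subset_cl hX))
            (Finset.insert_subset hyE (M.cl_subset_ground X))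
      _ = M.rk X := hyr
  · exact M.subset_cl (M.cl_subset_ground X)

lemma rk_le_erase_add_one {X : Finset α} (hX : X ⊆ M.E) {x : α} (hx : x ∈ X) :
    M.rk X ≤ M.rk (X.erase x) + 1 := by
  have h := M.rk_insert_le (X := X.erase x) ((Finset.erase_subset _ _).trans hX) (hX hx)
  rwa [Finset.insert_erase hx] at h

lemma rk_erase_le {X : Finset α} (hX : X ⊆ M.E) (x : α) :
    M.rk (X.erase x) ≤ M.rk X :=
  M.rk_mono _ _ (Finset.erase_subset _ _) hX

/-- Coloop lemma. -/
lemma coloop_insert {F : Finset α} (hF : F ⊆ M.E) {x : α} (hx : x ∈ F)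
    (hlt : M.rk (F.erase x) < M.rk F) {W : Finset α} (hW : W ⊆ F.erase x) :
    M.rk (insert x W) = M.rk W + 1 := by
  have hWE : W ⊆ M.E := hW.trans ((Finset.erase_subset _ _).trans hF)
  have hsub := M.rk_submod (insert x W) (F.erase x)
    (Finset.insert_subset (hF hx) hWE) ((Finset.erase_subset _ _).trans hF)
  have hU : insert x W ∪ F.erase x = F := by
    ext z
    simp only [Finset.mem_union, Finset.mem_insert, Finset.mem_erase]
    constructor
    · rintro (⟨rfl | hz⟩ | ⟨_, hz⟩)
      · exact hx
      · exact (Finset.mem_erase.mp (hW ‹z ∈ W›)).2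
      · exact hz
    · intro hz
      by_cases h : z = x
      · exact Or.inl (Or.inl h)
      · exact Or.inr ⟨h, hz⟩
  have hI : insert x W ∩ F.erase x = W := by
    rw [Finset.insert_inter_of_notMem (by simp), Finset.inter_eq_left.mpr hW]
  rw [hU, hI] at hsub
  have hle := M.rk_insert_le hWE (hF hx)
  omega

lemma rk_sdiff_coloops {F : Finset α} (hF : F ⊆ M.E) {D : Finset α} (hDF : D ⊆ F)
    (hD : ∀ d ∈ D, M.rk (F.erase d) < M.rk F) :
    M.rk F = M.rk (F \ D) + D.card := by
  classical
  induction D using Finset.induction_on with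
  | empty => simp
  | @insert a s ha ih =>
    have hsF : s ⊆ F := (Finset.subset_insert a s).trans hDF
    have haF : a ∈ F := hDF (Finset.mem_insert_self a s)
    have ih' := ih hsF (fun d hd => hD d (Finset.mem_insert_of_mem hd))
    have h1 : F \ s = insert a (F \ insert a s) := by
      ext z
      simp only [Finset.mem_sdiff, Finset.mem_insert]
      constructor
      · rintro ⟨hzF, hzs⟩
        by_cases h : z = a
        · exact Or.inl h
        · exact Or.inr ⟨hzF, by simp [h, hzs]⟩
      · rintro (rfl | ⟨hzF, hz⟩)
        · exact ⟨haF, ha⟩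
        · exact ⟨hzF, fun h => hz (Or.inr h)⟩
    have h2 : F \ insert a s ⊆ F.erase a := by
      intro z hz
      obtain ⟨hzF, hz'⟩ := Finset.mem_sdiff.mp hz
      exact Finset.mem_erase.mpr ⟨fun h => hz' (h ▸ Finset.mem_insert_self a s), hzF⟩
    have h3 := M.coloop_insert hF haF (hD a (Finset.mem_insert_self a s)) h2
    rw [← h1] at h3
    rw [Finset.card_insert_of_notMem ha]
    push_cast
    omega

lemma cyc_subset (F : Finset α) : M.cyc F ⊆ F := Finset.filter_subset _ _

lemma sdiff_cyc_coloops {F : Finset α} (hF : F ⊆ M.E) :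
    ∀ d ∈ F \ M.cyc F, M.rk (F.erase d) < M.rk F := by
  intro d hd
  obtain ⟨hdF, hd'⟩ := Finset.mem_sdiff.mp hd
  have hne : M.rk (F.erase d) ≠ M.rk F := by
    intro h
    exact hd' (Finset.mem_filter.mpr ⟨hdF, h⟩)
  exact lt_of_le_of_ne (M.rk_erase_le hF d) hne

lemma rk_cyc {F : Finset α} (hF : F ⊆ M.E) :
    M.rk F = M.rk (M.cyc F) + ((F \ M.cyc F).card : ℤ) := by
  have h := M.rk_sdiff_coloops hF (Finset.sdiff_subset) (M.sdiff_cyc_coloops hF)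
  rwa [Finset.sdiff_sdiff_self_left,
    Finset.inter_eq_right.mpr (M.cyc_subset F)] at h

lemma cyc_cyclic {F : Finset α} (hF : F ⊆ M.E) : M.Cyclic (M.cyc F) := by
  intro x hx
  obtain ⟨hxF, hxr⟩ := Finset.mem_filter.mp hx
  have hFE' : F.erase x ⊆ M.E := (Finset.erase_subset _ _).trans hF
  have hD : F \ M.cyc F ⊆ F.erase x := by
    intro d hd
    obtain ⟨hdF, hd'⟩ := Finset.mem_sdiff.mp hd
    exact Finset.mem_erase.mpr ⟨fun h => hd' (h ▸ hx), hdF⟩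
  have hD' : ∀ d ∈ F \ M.cyc F, M.rk ((F.erase x).erase d) < M.rk (F.erase x) := by
    intro d hd
    have h1 : (F.erase x).erase d ⊆ F.erase d := by
      intro z hz
      obtain ⟨h1, h2⟩ := Finset.mem_erase.mp hz
      exact Finset.mem_erase.mpr ⟨h1, (Finset.mem_erase.mp h2).2⟩
    calc M.rk ((F.erase x).erase d) ≤ M.rk (F.erase d) :=
          M.rk_mono _ _ h1 ((Finset.erase_subset _ _).trans hF)
      _ < M.rk F := M.sdiff_cyc_coloops hF d hd
      _ = M.rk (F.erase x) := hxr.symm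
  have h := M.rk_sdiff_coloops hFE' hD hD'
  have heq : F.erase x \ (F \ M.cyc F) = (M.cyc F).erase x := by
    ext z
    simp only [Finset.mem_sdiff, Finset.mem_erase]
    constructor
    · rintro ⟨⟨hzx, hzF⟩, hz⟩
      refine ⟨hzx, ?_⟩
      by_contra hc
      exact hz ⟨hzF, hc⟩
    · rintro ⟨hzx, hz⟩
      exact ⟨⟨hzx, M.cyc_subset F hz⟩, fun h => h.2 hz⟩
  rw [heq] at h
  have h2 := M.rk_cyc hF
  omega

lemma cyclic_subset_cyc {F W : Finset α} (hF : F ⊆ M.E) (hW : W ⊆ F)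
    (hWc : M.Cyclic W) : W ⊆ M.cyc F := by
  intro x hx
  refine Finset.mem_filter.mpr ⟨hW hx, ?_⟩
  by_contra hne
  have hlt : M.rk (F.erase x) < M.rk F :=
    lt_of_le_of_ne (M.rk_erase_le hF x) hne
  have hsub : W.erase x ⊆ F.erase x := Finset.erase_subset_erase _ hW
  have h := M.coloop_insert hF (hW hx) hlt hsub
  rw [Finset.insert_erase hx, hWc x hx] at h
  omega

lemma cyc_flat {F : Finset α} (hF : F ⊆ M.E) (hflat : M.cl F = F) :
    M.cl (M.cyc F) = M.cyc F := by
  have hcE : M.cyc F ⊆ M.E := (M.cyc_subset F).trans hF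
  apply le_antisymm
  · intro y hy
    obtain ⟨hyE, hyr⟩ := Finset.mem_filter.mp hy
    have hDE : F \ M.cyc F ⊆ M.E := (Finset.sdiff_subset).trans hF
    have hyF : y ∈ F := by
      have hins : insert y F = insert y (M.cyc F) ∪ (F \ M.cyc F) := by
        ext z
        simp only [Finset.mem_insert, Finset.mem_union, Finset.mem_sdiff]
        constructor
        · rintro (rfl | hz)
          · exact Or.inl (Or.inl rfl)
          · by_cases h : z ∈ M.cyc F
            · exact Or.inl (Or.inr h)
            · exact Or.inr ⟨hz, h⟩
        · rintro (⟨rfl | hz⟩ | ⟨hz, _⟩)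
          · exact Or.inl rfl
          · exact Or.inr (M.cyc_subset F hz)
          · exact Or.inr hz
      have h1 : M.rk (insert y F) ≤ M.rk F := by
        rw [hins]
        calc M.rk (insert y (M.cyc F) ∪ (F \ M.cyc F))
            ≤ M.rk (insert y (M.cyc F)) + ((F \ M.cyc F).card : ℤ) :=
              M.rk_union_le_add_card (Finset.insert_subset hyE hcE) hDE
          _ = M.rk (M.cyc F) + ((F \ M.cyc F).card : ℤ) := by rw [hyr]
          _ = M.rk F := (M.rk_cyc hF).symm
      have h2 : M.rk (insert y F) = M.rk F :=
        le_antisymm h1 (M.rk_le_insert hF hyE)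
      have : y ∈ M.cl F := Finset.mem_filter.mpr ⟨hyE, h2⟩
      rwa [hflat] at this
    refine Finset.mem_filter.mpr ⟨hyF, ?_⟩
    by_contra hne
    have hy' : y ∉ M.cyc F := fun h => hne (Finset.mem_filter.mp h).2
    have hlt : M.rk (F.erase y) < M.rk F := by
      refine lt_of_le_of_ne (M.rk_erase_le hF y) fun h => hne h
    have hsub : M.cyc F ⊆ F.erase y := by
      intro z hz
      exact Finset.mem_erase.mpr ⟨fun h => hy' (h ▸ hz), M.cyc_subset F hz⟩
    have h := M.coloop_insert hF hyF hlt hsub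
    omega
  · exact M.subset_cl hcE

lemma cyclic_union {X Y : Finset α} (hX : X ⊆ M.E) (hY : Y ⊆ M.E)
    (hXc : M.Cyclic X) (hYc : M.Cyclic Y) : M.Cyclic (X ∪ Y) := by
  have key : ∀ (A B : Finset α), A ⊆ M.E → B ⊆ M.E → M.Cyclic A →
      ∀ x ∈ A, M.rk ((A ∪ B).erase x) = M.rk (A ∪ B) := by
    intro A B hA hB hAc x hx
    have hUE : A ∪ B ⊆ M.E := Finset.union_subset hA hB
    refine le_antisymm (M.rk_erase_le hUE x) ?_
    have hsub := M.rk_submod A ((A ∪ B).erase x) hA ((Finset.erase_subset _ _).trans hUE)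
    have hU : A ∪ (A ∪ B).erase x = A ∪ B := by
      ext z
      simp only [Finset.mem_union, Finset.mem_erase]
      constructor
      · rintro (hz | ⟨_, hz⟩)
        · exact Or.inl hz
        · exact hz
      · intro hz
        by_cases h : z = x
        · exact Or.inl (h ▸ hx)
        · exact Or.inr ⟨h, hz⟩
    have hI : A ∩ (A ∪ B).erase x = A.erase x := by
      ext z
      simp only [Finset.mem_inter, Finset.mem_erase, Finset.mem_union]
      constructor
      · rintro ⟨hzA, hzx, _⟩
        exact ⟨hzx, hzA⟩
      · rintro ⟨hzx, hzA⟩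
        exact ⟨hzA, hzx, Or.inl hzA⟩
    rw [hU, hI, hAc x hx] at hsub
    linarith
  intro x hx
  rcases Finset.mem_union.mp hx with h | h
  · exact key X Y hX hY hXc x h
  · have := key Y X hY hX hYc x h
    rwa [Finset.union_comm Y X] at this
  
lemma cl_cyclic {W : Finset α} (hW : W ⊆ M.E) (hWc : M.Cyclic W) :
    M.Cyclic (M.cl W) := by
  intro x hx
  have hclE := M.cl_subset_ground W
  refine le_antisymm (M.rk_erase_le hclE x) ?_
  by_cases h : x ∈ W
  · calc M.rk (M.cl W) = M.rk W := M.rk_cl hW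
      _ = M.rk (W.erase x) := (hWc x h).symm
      _ ≤ M.rk ((M.cl W).erase x) :=
          M.rk_mono _ _ (Finset.erase_subset_erase _ (M.subset_cl hW))
            ((Finset.erase_subset _ _).trans hclE)
  · calc M.rk (M.cl W) = M.rk W := M.rk_cl hW
      _ ≤ M.rk ((M.cl W).erase x) :=
          M.rk_mono _ _ (fun z hz => Finset.mem_erase.mpr
            ⟨fun he => h (he ▸ hz), M.subset_cl hW hz⟩)
            ((Finset.erase_subset _ _).trans hclE)

end RankMatroid

/-- Axiom scheme for matroids via cyclic flats and their ranks (Bonin–de Mier, Sims). -/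
theorem stmt4 {α : Type} [DecidableEq α] (E : Finset α)
    (Zc : Set (Finset α)) (hZE : ∀ X ∈ Zc, X ⊆ E) (hZne : Zc.Nonempty)
    (ρ : Finset α → ℤ) :
    (∃ M : RankMatroid α, M.E = E ∧ M.Z = Zc ∧ ∀ X ∈ Zc, M.rk X = ρ X) ↔
    (∃ (sup inf : Finset α → Finset α → Finset α) (z0 : Finset α),
      z0 ∈ Zc ∧ (∀ X ∈ Zc, z0 ⊆ X) ∧
      (∀ X ∈ Zc, ∀ Y ∈ Zc, sup X Y ∈ Zc ∧ X ⊆ sup X Y ∧ Y ⊆ sup X Y ∧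
        ∀ W ∈ Zc, X ⊆ W → Y ⊆ W → sup X Y ⊆ W) ∧
      (∀ X ∈ Zc, ∀ Y ∈ Zc, inf X Y ∈ Zc ∧ inf X Y ⊆ X ∧ inf X Y ⊆ Y ∧
        ∀ W ∈ Zc, W ⊆ X → W ⊆ Y → W ⊆ inf X Y) ∧
      ρ z0 = 0 ∧
      (∀ X ∈ Zc, ∀ Y ∈ Zc, X ⊂ Y →
        0 < ρ Y - ρ X ∧ ρ Y - ρ X < (Y.card : ℤ) - (X.card : ℤ)) ∧
      (∀ X ∈ Zc, ∀ Y ∈ Zc,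
        ρ X + ρ Y ≥ ρ (sup X Y) + ρ (inf X Y) + (((X ∩ Y) \ inf X Y).card : ℤ))) := by
  constructor
  · -- Forward direction
    rintro ⟨M, hE, hZ, hρ⟩
    subst hE
    have hmem : ∀ X ∈ Zc, X ⊆ M.E ∧ M.Cyclic X ∧ M.cl X = X := by
      intro X hX; rw [← hZ] at hX; exact hX
    -- z0
    have h0 : M.rk (M.cl ∅) = 0 := by
      rw [M.rk_cl (Finset.empty_subset _), M.rk_empty']
    have hz0Zc : M.cl ∅ ∈ Zc := by
      rw [← hZ]
      refine ⟨M.cl_subset_ground ∅, ?_, M.cl_flat (Finset.empty_subset _)⟩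
      intro x hx
      have h1 : 0 ≤ M.rk ((M.cl ∅).erase x) :=
        M.rk_nonneg _ ((Finset.erase_subset _ _).trans (M.cl_subset_ground ∅))
      have h2 : M.rk ((M.cl ∅).erase x) ≤ M.rk (M.cl ∅) :=
        M.rk_erase_le (M.cl_subset_ground ∅) x
      omega
    have hz0min : ∀ X ∈ Zc, M.cl ∅ ⊆ X := by
      intro X hX y hy
      obtain ⟨hXE, hXc, hXf⟩ := hmem X hX
      obtain ⟨hyE, hyr⟩ := Finset.mem_filter.mp hy
      have hy0 : M.rk {y} = 0 := by
        have : insert y (∅ : Finset α) = {y} := rfl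
        rw [this, M.rk_empty'] at hyr
        exact hyr
      have hsub := M.rk_submod X {y} hXE (by simpa using hyE)
      have hnn : 0 ≤ M.rk (X ∩ {y}) :=
        M.rk_nonneg _ (Finset.inter_subset_left.trans hXE)
      have hmo : M.rk X ≤ M.rk (X ∪ {y}) :=
        M.rk_mono _ _ Finset.subset_union_left
          (Finset.union_subset hXE (by simpa using hyE))
      have heq : M.rk (insert y X) = M.rk X := by
        have : insert y X = X ∪ {y} := by rw [Finset.insert_eq, Finset.union_comm]
        rw [this]; linarith
      have : y ∈ M.cl X := Finset.mem_filter.mpr ⟨hyE, heq⟩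
      rwa [hXf] at this
    -- sup
    have hsupZc : ∀ X ∈ Zc, ∀ Y ∈ Zc, M.cl (X ∪ Y) ∈ Zc := by
      intro X hX Y hY
      obtain ⟨hXE, hXc, hXf⟩ := hmem X hX
      obtain ⟨hYE, hYc, hYf⟩ := hmem Y hY
      have hU : X ∪ Y ⊆ M.E := Finset.union_subset hXE hYE
      rw [← hZ]
      exact ⟨M.cl_subset_ground _, M.cl_cyclic hU (M.cyclic_union hXE hYE hXc hYc),
        M.cl_flat hU⟩
    -- inf
    have hXYflat : ∀ X ∈ Zc, ∀ Y ∈ Zc, M.cl (X ∩ Y) = X ∩ Y := by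
      intro X hX Y hY
      obtain ⟨hXE, hXc, hXf⟩ := hmem X hX
      obtain ⟨hYE, hYc, hYf⟩ := hmem Y hY
      apply le_antisymm
      · intro y hy
        have h1 : y ∈ M.cl X := M.cl_mono Finset.inter_subset_left hXE hy
        have h2 : y ∈ M.cl Y := M.cl_mono Finset.inter_subset_right hYE hy
        rw [hXf] at h1; rw [hYf] at h2
        exact Finset.mem_inter.mpr ⟨h1, h2⟩
      · exact M.subset_cl (Finset.inter_subset_left.trans hXE)
    have hinfZc : ∀ X ∈ Zc, ∀ Y ∈ Zc, M.cyc (X ∩ Y) ∈ Zc := by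
      intro X hX Y hY
      obtain ⟨hXE, _, _⟩ := hmem X hX
      have hI : X ∩ Y ⊆ M.E := Finset.inter_subset_left.trans hXE
      rw [← hZ]
      exact ⟨(M.cyc_subset _).trans hI, M.cyc_cyclic hI,
        M.cyc_flat hI (hXYflat X hX Y hY)⟩
    refine ⟨fun X Y => M.cl (X ∪ Y), fun X Y => M.cyc (X ∩ Y), M.cl ∅,
      hz0Zc, hz0min, ?_, ?_, ?_, ?_, ?_⟩
    · -- sup properties
      intro X hX Y hY
      obtain ⟨hXE, hXc, hXf⟩ := hmem X hX
      obtain ⟨hYE, hYc, hYf⟩ := hmem Y hY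
      have hU : X ∪ Y ⊆ M.E := Finset.union_subset hXE hYE
      refine ⟨hsupZc X hX Y hY,
        Finset.subset_union_left.trans (M.subset_cl hU),
        Finset.subset_union_right.trans (M.subset_cl hU), ?_⟩
      intro W hW hXW hYW
      obtain ⟨hWE, _, hWf⟩ := hmem W hW
      have := M.cl_mono (Finset.union_subset hXW hYW) hWE
      rwa [hWf] at this
    · -- inf properties
      intro X hX Y hY
      obtain ⟨hXE, hXc, hXf⟩ := hmem X hX
      obtain ⟨hYE, hYc, hYf⟩ := hmem Y hY
      have hI : X ∩ Y ⊆ M.E := Finset.inter_subset_left.trans hXE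
      refine ⟨hinfZc X hX Y hY,
        (M.cyc_subset _).trans Finset.inter_subset_left,
        (M.cyc_subset _).trans Finset.inter_subset_right, ?_⟩
      intro W hW h1 h2
      exact M.cyclic_subset_cyc hI (Finset.subset_inter h1 h2) (hmem W hW).2.1
    · rw [← hρ _ hz0Zc]; exact h0
    · -- (Z2)
      intro X hX Y hY hss
      obtain ⟨hXE, hXc, hXf⟩ := hmem X hX
      obtain ⟨hYE, hYc, hYf⟩ := hmem Y hY
      rw [← hρ X hX, ← hρ Y hY]
      obtain ⟨y, hyY, hyX⟩ := Finset.exists_of_ssubset hss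
      constructor
      · have hle : M.rk X ≤ M.rk Y := M.rk_mono _ _ hss.subset hYE
        rcases lt_or_eq_of_le hle with h | h
        · linarith
        · exfalso
          have h1 : M.rk (insert y X) ≤ M.rk Y :=
            M.rk_mono _ _ (Finset.insert_subset hyY hss.subset) hYE
          have h2 : M.rk X ≤ M.rk (insert y X) := M.rk_le_insert hXE (hYE hyY)
          have heq : M.rk (insert y X) = M.rk X := by omega
          have : y ∈ M.cl X := Finset.mem_filter.mpr ⟨hYE hyY, heq⟩
          rw [hXf] at this
          exact hyX this
      · have hXsub : X ⊆ Y.erase y := fun z hz =>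
          Finset.mem_erase.mpr ⟨fun h => hyX (h ▸ hz), hss.subset hz⟩
        have hsplit : X ∪ (Y.erase y \ X) = Y.erase y :=
          Finset.union_sdiff_of_subset hXsub
        have hle : M.rk (Y.erase y) ≤ M.rk X + ((Y.erase y \ X).card : ℤ) := by
          have h := M.rk_union_le_add_card (A := Y.erase y \ X) hXE
            ((Finset.sdiff_subset).trans ((Finset.erase_subset _ _).trans hYE))
          rwa [hsplit] at h
        have hYer : M.rk (Y.erase y) = M.rk Y := hYc y hyY
        have he1 : Y.erase y \ X = (Y \ X).erase y := by
          ext z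
          simp only [Finset.mem_sdiff, Finset.mem_erase]
          tauto
        have hc1 : ((Y \ X).erase y).card + 1 = (Y \ X).card :=
          Finset.card_erase_add_one (Finset.mem_sdiff.mpr ⟨hyY, hyX⟩)
        have hc2 : (Y \ X).card + X.card = Y.card :=
          Finset.card_sdiff_add_card_eq_card hss.subset
        have hc1' : (((Y \ X).erase y).card : ℤ) + 1 = ((Y \ X).card : ℤ) := by
          exact_mod_cast hc1
        have hc2' : ((Y \ X).card : ℤ) + (X.card : ℤ) = (Y.card : ℤ) := by
          exact_mod_cast hc2
        rw [he1] at hle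
        linarith
    · -- (Z3)
      intro X hX Y hY
      obtain ⟨hXE, hXc, hXf⟩ := hmem X hX
      obtain ⟨hYE, hYc, hYf⟩ := hmem Y hY
      have hU : X ∪ Y ⊆ M.E := Finset.union_subset hXE hYE
      have hI : X ∩ Y ⊆ M.E := Finset.inter_subset_left.trans hXE
      rw [← hρ X hX, ← hρ Y hY, ← hρ _ (hsupZc X hX Y hY), ← hρ _ (hinfZc X hX Y hY)]
      have hsub := M.rk_submod X Y hXE hYE
      have hclr : M.rk (M.cl (X ∪ Y)) = M.rk (X ∪ Y) := M.rk_cl hU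
      have hcycr := M.rk_cyc hI
      linarith
  · -- Backward direction
    rintro ⟨sup, inf, z0, hz0, hz0min, hsup, hinf, hρ0, hZ2, hZ3⟩
    classical
    have hρnn : ∀ F ∈ Zc, 0 ≤ ρ F := by
      intro F hF
      rcases eq_or_ne z0 F with rfl | hne
      · rw [hρ0]
      · have hss : z0 ⊂ F := ssubset_of_subset_of_ne (hz0min F hF) hne
        have h := (hZ2 z0 hz0 F hF hss).1
        rw [hρ0] at h
        linarith
    -- Key lemma
    have hkey : ∀ F ∈ Zc, ∀ G ∈ Zc, ρ F ≤ ρ G + ((F \ G).card : ℤ) ∧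
        (¬ F ⊆ G → ρ F + 1 ≤ ρ G + ((F \ G).card : ℤ)) := by
      intro F hF G hG
      obtain ⟨hSZc, hFS, hGS, _⟩ := hsup F hF G hG
      obtain ⟨hIZc, hIF, hIG, hImax⟩ := hinf F hF G hG
      have hstep1 : ρ F ≤ ρ (sup F G) := by
        rcases eq_or_ne F (sup F G) with h | h
        · rw [← h]
        · have := (hZ2 F hF _ hSZc (ssubset_of_subset_of_ne hFS h)).1
          linarith
      have hstep2 : ρ (inf F G) + (((F ∩ G) \ inf F G).card : ℤ) ≤ ρ G := by
        have := hZ3 F hF G hG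
        linarith
      by_cases hFG : F ⊆ G
      · have hFI : F ⊆ inf F G := hImax F hF (subset_refl F) hFG
        have hIFeq : inf F G = F := subset_antisymm hIF hFI
        have h1 : ρ F ≤ ρ G := by
          rw [hIFeq] at hstep2
          have : (0:ℤ) ≤ (((F ∩ G) \ F).card : ℤ) := by positivity
          linarith
        have h2 : F \ G = ∅ := Finset.sdiff_eq_empty_iff_subset.mpr hFG
        rw [h2]
        simp only [Finset.card_empty, Nat.cast_zero, add_zero]
        exact ⟨h1, fun h => absurd hFG h⟩
      · have hIne : inf F G ≠ F := fun h => hFG (h ▸ hIG)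
        have hss : inf F G ⊂ F := ssubset_of_subset_of_ne hIF hIne
        have hZ2' := (hZ2 _ hIZc F hF hss).2
        have hcard : (F \ inf F G).card = (F \ G).card + ((F ∩ G) \ inf F G).card := by
          have hset : F \ inf F G = (F \ G) ∪ ((F ∩ G) \ inf F G) := by
            ext a
            simp only [Finset.mem_sdiff, Finset.mem_union, Finset.mem_inter]
            have hag : a ∈ inf F G → a ∈ G := fun h => hIG h
            tauto
          rw [hset, Finset.card_union_of_disjoint]
          rw [Finset.disjoint_left]
          intro a ha hb
          exact (Finset.mem_sdiff.mp ha).2 (Finset.mem_inter.mp (Finset.mem_sdiff.mp hb).1).2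
        have hcardI : ((F \ inf F G).card : ℤ) = (F.card : ℤ) - ((inf F G).card : ℤ) := by
          have := Finset.card_sdiff_add_card_eq_card hIF
          push_cast [← this]
          ring
        have hcard' : ((F \ inf F G).card : ℤ)
            = ((F \ G).card : ℤ) + (((F ∩ G) \ inf F G).card : ℤ) := by
          exact_mod_cast hcard
        have hfinal : ρ F + 1 ≤ ρ G + ((F \ G).card : ℤ) := by linarith
        exact ⟨by linarith, fun _ => hfinal⟩
    -- the finite collection of cyclic flats and the rank function
    have hdec : DecidablePred (· ∈ Zc) := Classical.decPred _
    set Zf : Finset (Finset α) := E.powerset.filter (fun F => F ∈ Zc) with hZfdef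
    have memZf : ∀ F : Finset α, F ∈ Zf ↔ F ∈ Zc := by
      intro F
      simp only [hZfdef, Finset.mem_filter, Finset.mem_powerset]
      exact ⟨fun h => h.2, fun h => ⟨hZE F h, h⟩⟩
    have hZfne : Zf.Nonempty := ⟨z0, (memZf z0).mpr hz0⟩
    set rkf : Finset α → ℤ :=
      fun X => (Zf.image (fun F => ρ F + ((X \ F).card : ℤ))).min'
        (hZfne.image _) with hrkfdef
    have hrk_le : ∀ (X : Finset α), ∀ F ∈ Zc, rkf X ≤ ρ F + ((X \ F).card : ℤ) := by
      intro X F hF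
      exact Finset.min'_le _ _ (Finset.mem_image_of_mem _ ((memZf F).mpr hF))
    have hrk_ex : ∀ X : Finset α, ∃ F ∈ Zc, rkf X = ρ F + ((X \ F).card : ℤ) := by
      intro X
      have h := Finset.min'_mem (Zf.image (fun F => ρ F + ((X \ F).card : ℤ)))
        (hZfne.image _)
      obtain ⟨F, hF, hval⟩ := Finset.mem_image.mp h
      exact ⟨F, (memZf F).mp hF, hval.symm⟩
    have hrk_ge : ∀ (X : Finset α) (c : ℤ),
        (∀ F ∈ Zc, c ≤ ρ F + ((X \ F).card : ℤ)) → c ≤ rkf X := by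
      intro X c h
      apply Finset.le_min'
      intro y hy
      obtain ⟨F, hF, hval⟩ := Finset.mem_image.mp hy
      exact hval ▸ h F ((memZf F).mp hF)
    have hrkZ : ∀ F ∈ Zc, rkf F = ρ F := by
      intro F hF
      apply le_antisymm
      · have := hrk_le F F hF
        simpa using this
      · exact hrk_ge F (ρ F) (fun G hG => (hkey F hF G hG).1)
    -- rank axioms
    have hnn : ∀ X : Finset α, 0 ≤ rkf X := by
      intro X
      obtain ⟨F, hF, heq⟩ := hrk_ex X
      rw [heq]
      have h1 := hρnn F hF
      have h2 : (0:ℤ) ≤ ((X \ F).card : ℤ) := by positivity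
      linarith
    have hlc : ∀ X : Finset α, rkf X ≤ (X.card : ℤ) := by
      intro X
      calc rkf X ≤ ρ z0 + ((X \ z0).card : ℤ) := hrk_le X z0 hz0
        _ = ((X \ z0).card : ℤ) := by rw [hρ0]; ring
        _ ≤ (X.card : ℤ) := by
            exact_mod_cast Finset.card_le_card (Finset.sdiff_subset)
    have hmo : ∀ X Y : Finset α, X ⊆ Y → rkf X ≤ rkf Y := by
      intro X Y hXY
      obtain ⟨G, hG, heq⟩ := hrk_ex Y
      rw [heq]
      calc rkf X ≤ ρ G + ((X \ G).card : ℤ) := hrk_le X G hG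
        _ ≤ ρ G + ((Y \ G).card : ℤ) := by
            have : (X \ G).card ≤ (Y \ G).card :=
              Finset.card_le_card (fun z hz => Finset.mem_sdiff.mpr
                ⟨hXY (Finset.mem_sdiff.mp hz).1, (Finset.mem_sdiff.mp hz).2⟩)
            have h' : ((X \ G).card : ℤ) ≤ ((Y \ G).card : ℤ) := by exact_mod_cast this
            linarith
    have hsm : ∀ X Y : Finset α, rkf (X ∪ Y) + rkf (X ∩ Y) ≤ rkf X + rkf Y := by
      intro X Y
      obtain ⟨F, hF, hFeq⟩ := hrk_ex X
      obtain ⟨G, hG, hGeq⟩ := hrk_ex Y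
      obtain ⟨hSZc, hFS, hGS, _⟩ := hsup F hF G hG
      obtain ⟨hIZc, hIF, hIG, _⟩ := hinf F hF G hG
      have h1 := hrk_le (X ∪ Y) _ hSZc
      have h2 := hrk_le (X ∩ Y) _ hIZc
      have h3 := hZ3 F hF G hG
      have hFG : F ∪ G ⊆ sup F G := Finset.union_subset hFS hGS
      have hc0 : ((X ∪ Y) \ sup F G).card ≤ ((X ∪ Y) \ (F ∪ G)).card :=
        Finset.card_le_card (Finset.sdiff_subset_sdiff (subset_refl _) hFG)
      -- combinatorial inequality
      have hIFG : inf F G ⊆ F ∩ G := Finset.subset_inter hIF hIG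
      have hcard : ((X ∪ Y) \ (F ∪ G)).card + ((X ∩ Y) \ inf F G).card ≤
          (X \ F).card + (Y \ G).card + ((F ∩ G) \ inf F G).card := by
        set U := X ∪ Y with hU
        have hsum : ∀ S : Finset α, S ⊆ U →
            S.card = ∑ e ∈ U, (if e ∈ S then 1 else 0) := by
          intro S hS
          rw [Finset.sum_ite_mem, Finset.inter_eq_right.mpr hS]
          simp
        have hsumle : ∀ S : Finset α,
            (∑ e ∈ U, (if e ∈ S then 1 else 0)) ≤ S.card := by
          intro S
          rw [Finset.sum_ite_mem]
          simpa using Finset.card_le_card (Finset.inter_subset_right : U ∩ S ⊆ S)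
        have hs1 : (X ∪ Y) \ (F ∪ G) ⊆ U := Finset.sdiff_subset
        have hs2 : (X ∩ Y) \ inf F G ⊆ U :=
          Finset.sdiff_subset.trans (Finset.inter_subset_left.trans Finset.subset_union_left)
        have hs3 : X \ F ⊆ U := Finset.sdiff_subset.trans Finset.subset_union_left
        have hs4 : Y \ G ⊆ U := Finset.sdiff_subset.trans Finset.subset_union_right
        rw [hsum _ hs1, hsum _ hs2, hsum _ hs3, hsum _ hs4, ← Finset.sum_add_distrib,
          ← Finset.sum_add_distrib]
        calc (∑ e ∈ U, ((if e ∈ (X ∪ Y) \ (F ∪ G) then 1 else 0) +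
                (if e ∈ (X ∩ Y) \ inf F G then 1 else 0)))
            ≤ ∑ e ∈ U, ((if e ∈ X \ F then 1 else 0) + (if e ∈ Y \ G then 1 else 0) +
                (if e ∈ (F ∩ G) \ inf F G then 1 else 0)) := by
              apply Finset.sum_le_sum
              intro e _
              by_cases hx : e ∈ X <;> by_cases hy : e ∈ Y <;>
                by_cases hf : e ∈ F <;> by_cases hg : e ∈ G <;>
                by_cases hi : e ∈ inf F G <;>
                simp [Finset.mem_sdiff, Finset.mem_union, Finset.mem_inter,
                  hx, hy, hf, hg, hi]
          _ = (∑ e ∈ U, ((if e ∈ X \ F then 1 else 0) + (if e ∈ Y \ G then 1 else 0))) +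
                ∑ e ∈ U, (if e ∈ (F ∩ G) \ inf F G then 1 else 0) := by
              rw [← Finset.sum_add_distrib]
          _ ≤ (∑ e ∈ U, ((if e ∈ X \ F then 1 else 0) + (if e ∈ Y \ G then 1 else 0))) +
                ((F ∩ G) \ inf F G).card := by
              have := hsumle ((F ∩ G) \ inf F G)
              omega
      have hc0' : (((X ∪ Y) \ sup F G).card : ℤ) ≤ (((X ∪ Y) \ (F ∪ G)).card : ℤ) := by
        exact_mod_cast hc0
      have hcard' : (((X ∪ Y) \ (F ∪ G)).card : ℤ) + (((X ∩ Y) \ inf F G).card : ℤ) ≤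
          ((X \ F).card : ℤ) + ((Y \ G).card : ℤ) + (((F ∩ G) \ inf F G).card : ℤ) := by
        exact_mod_cast hcard
      linarith
    -- build the matroid
    refine ⟨⟨E, rkf, fun X _ => hnn X, fun X _ => hlc X,
      fun X Y h _ => hmo X Y h, fun X Y _ _ => hsm X Y⟩, rfl, ?_, ?_⟩
    swap
    · intro X hX
      exact hrkZ X hX
    -- Z(M) = Zc
    · set M : RankMatroid α := ⟨E, rkf, fun X _ => hnn X, fun X _ => hlc X,
        fun X Y h _ => hmo X Y h, fun X Y _ _ => hsm X Y⟩ with hMdef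
      have hMrk : ∀ X : Finset α, M.rk X = rkf X := fun _ => rfl
      have hME : M.E = E := rfl
      -- each member of Zc is cyclic in M
      have hcyclicF : ∀ F ∈ Zc, M.Cyclic F := by
        intro F hF x hx
        rw [hMrk, hMrk]
        apply le_antisymm
        · exact hmo _ _ (Finset.erase_subset _ _)
        · rw [hrkZ F hF]
          apply hrk_ge
          intro G hG
          by_cases hxG : x ∈ G
          · have hset : F.erase x \ G = F \ G := by
              ext z
              simp only [Finset.mem_sdiff, Finset.mem_erase]
              constructor
              · rintro ⟨⟨_, h1⟩, h2⟩; exact ⟨h1, h2⟩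
              · rintro ⟨h1, h2⟩
                exact ⟨⟨fun h => h2 (h ▸ hxG), h1⟩, h2⟩
            rw [hset]
            exact (hkey F hF G hG).1
          · have hns : ¬ F ⊆ G := fun h => hxG (h hx)
            have hset : F.erase x \ G = (F \ G).erase x := by
              ext z
              simp only [Finset.mem_sdiff, Finset.mem_erase]
              tauto
            have hc : ((F \ G).erase x).card + 1 = (F \ G).card :=
              Finset.card_erase_add_one (Finset.mem_sdiff.mpr ⟨hx, hxG⟩)
            have hc' : (((F \ G).erase x).card : ℤ) + 1 = ((F \ G).card : ℤ) := by
              exact_mod_cast hc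
            have := (hkey F hF G hG).2 hns
            rw [hset]
            linarith
      -- each member of Zc is a flat of M
      have hflatF : ∀ F ∈ Zc, M.cl F = F := by
        intro F hF
        ext y
        simp only [RankMatroid.cl, Finset.mem_filter, hMrk, hME]
        constructor
        · rintro ⟨hyE, hyr⟩
          by_contra hyF
          have hbig : ρ F + 1 ≤ rkf (insert y F) := by
            apply hrk_ge
            intro G hG
            by_cases hyG : y ∈ G
            · rw [Finset.insert_sdiff_of_mem _ hyG]
              by_cases hFG : F ⊆ G
              · have hss : F ⊂ G :=
                  ssubset_of_subset_of_ne hFG (fun h => hyF (h ▸ hyG))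
                have := (hZ2 F hF G hG hss).1
                have hpos : (0:ℤ) ≤ ((F \ G).card : ℤ) := by positivity
                linarith
              · exact (hkey F hF G hG).2 hFG
            · have hset : insert y F \ G = insert y (F \ G) :=
                Finset.insert_sdiff_of_notMem _ hyG
              have hnotin : y ∉ F \ G := fun h => hyF (Finset.mem_sdiff.mp h).1
              have hc : (insert y (F \ G)).card = (F \ G).card + 1 :=
                Finset.card_insert_of_notMem hnotin
              have hc' : ((insert y (F \ G)).card : ℤ) = ((F \ G).card : ℤ) + 1 := by
                exact_mod_cast hc
              have := (hkey F hF G hG).1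
              rw [hset]
              linarith
          rw [hyr, hrkZ F hF] at hbig
          linarith
        · intro hyF
          refine ⟨hZE F hF hyF, ?_⟩
          rw [Finset.insert_eq_self.mpr hyF]
      apply Set.eq_of_subset_of_subset
      · -- every cyclic flat of M lies in Zc
        intro X hX
        obtain ⟨hXE, hXc, hXf⟩ := hX
        rw [hME] at hXE
        obtain ⟨F, hF, heq⟩ := hrk_ex X
        have hFE : F ⊆ E := hZE F hF
        -- F ⊆ X
        have hXF : rkf (X ∪ F) = rkf X := by
          apply le_antisymm
          · have h1 := hrk_le (X ∪ F) F hF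
            have hset : (X ∪ F) \ F = X \ F := Finset.union_sdiff_right _ _
            rw [hset] at h1
            rw [heq]
            exact h1
          · exact hmo _ _ Finset.subset_union_left
        have hFX : F ⊆ X := by
          intro y hyF
          have h1 : rkf (insert y X) = rkf X := by
            apply le_antisymm
            · calc rkf (insert y X) ≤ rkf (X ∪ F) :=
                    hmo _ _ (Finset.insert_subset
                      (Finset.mem_union_right X hyF) Finset.subset_union_left)
                _ = rkf X := hXF
            · exact hmo _ _ (Finset.subset_insert _ _)
          have : y ∈ M.cl X := by
            simp only [RankMatroid.cl, Finset.mem_filter, hMrk, hME]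
            exact ⟨hFE hyF, h1⟩
          rwa [hXf] at this
        -- X ⊆ F
        have hXsubF : X ⊆ F := by
          intro x hx
          by_contra hxF
          have h1 := hrk_le (X.erase x) F hF
          have hset : X.erase x \ F = (X \ F).erase x := by
            ext z
            simp only [Finset.mem_sdiff, Finset.mem_erase]
            tauto
          have hc : ((X \ F).erase x).card + 1 = (X \ F).card :=
            Finset.card_erase_add_one (Finset.mem_sdiff.mpr ⟨hx, hxF⟩)
          have hc' : (((X \ F).erase x).card : ℤ) + 1 = ((X \ F).card : ℤ) := by
            exact_mod_cast hc
          have h2 : M.rk (X.erase x) = M.rk X := hXc x hx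
          rw [hMrk, hMrk, heq] at h2
          rw [hset] at h1
          linarith
        have : X = F := subset_antisymm hXsubF hFX
        rw [this]
        exact hF
      · -- Zc ⊆ Z(M)
        intro F hF
        exact ⟨(hME.symm ▸ hZE F hF : F ⊆ M.E), hcyclicF F hF, hflatF F hF⟩
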